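/- For any group G, 3-cocycle ω ∈ Z³(G, U(1)), and elements g₁, g₂ ∈ G, the 2-cochains Ω_g satisfy Ω_{g₁g₂} = Ω_{g₁}^{g₂} · Ω_{g₂} · dγ(g₁,g₂), where γ(g₁,g₂)(g) = ω(g₁,g₂,g)·ω(^{g₁g₂}g, g₁, g₂) / ω(g₁, ^{g₂}g, g₂) and dγ(g₁,g₂)(h,k) = γ(g₁,g₂)(h)·γ(g₁,g₂)(k)·γ(g₁,g₂)(hk)⁻¹. -/

import Mathlib

/-- A `U(1)`-valued 3-cocycle on a group `G` (trivial action). -/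
def IsCocycle3 {G : Type*} [Group G] (ω : G → G → G → Circle) : Prop :=
  ∀ a b c d : G, ω b c d * ω a (b * c) d * ω a b c = ω (a * b) c d * ω a b (c * d)

/-- The 2-cochain `Ω_g(a,b) = ω(ᵍa, ᵍb, g)·ω(g, a, b)/ω(ᵍa, g, b)`, where `ᵍh = ghg⁻¹`. -/
noncomputable def OmegaCochain {G : Type*} [Group G] (ω : G → G → G → Circle)
    (g a b : G) : Circle :=
  ω (g * a * g⁻¹) (g * b * g⁻¹) g * ω g a b / ω (g * a * g⁻¹) g b

/-- The 1-cochain `γ(g₁,g₂)(g) = ω(g₁,g₂,g)·ω(^{g₁g₂}g, g₁, g₂)/ω(g₁, ^{g₂}g, g₂)`. -/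
noncomputable def gammaCochain {G : Type*} [Group G] (ω : G → G → G → Circle)
    (g₁ g₂ g : G) : Circle :=
  ω g₁ g₂ g * ω ((g₁ * g₂) * g * (g₁ * g₂)⁻¹) g₁ g₂ / ω g₁ (g₂ * g * g₂⁻¹) g₂

/-!
For an arbitrary 3-cochain `ω` the two sides differ exactly by six values of the coboundary `dω`,
one for each instance of the cocycle condition relating their factors; for a cocycle these are
all `1`.
-/
section

variable {G : Type*} [Group G]

noncomputable def coboundary3 (ω : G → G → G → Circle) (a b c d : G) : Circle :=
  ω b c d * ω a (b * c) d * ω a b c / (ω (a * b) c d * ω a b (c * d))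

theorem IsCocycle3.coboundary3_eq_one {ω : G → G → G → Circle} (hω : IsCocycle3 ω)
    (a b c d : G) : coboundary3 ω a b c d = 1 :=
  div_eq_one.mpr (hω a b c d)

theorem omegaCochain_mul_eq_mul_coboundary3 (ω : G → G → G → Circle) (g₁ g₂ h k : G) :
    OmegaCochain ω (g₁ * g₂) h k =
      OmegaCochain ω g₁ (g₂ * h * g₂⁻¹) (g₂ * k * g₂⁻¹) * OmegaCochain ω g₂ h k *
        (gammaCochain ω g₁ g₂ h * gammaCochain ω g₁ g₂ k / gammaCochain ω g₁ g₂ (h * k)) *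
        (coboundary3 ω g₁ (g₂ * h * g₂⁻¹) g₂ k *
            coboundary3 ω (g₁ * g₂ * h * (g₁ * g₂)⁻¹) g₁ (g₂ * k * g₂⁻¹) g₂ /
          (coboundary3 ω (g₁ * g₂ * h * (g₁ * g₂)⁻¹) g₁ g₂ k *
            coboundary3 ω g₁ (g₂ * h * g₂⁻¹) (g₂ * k * g₂⁻¹) g₂ * coboundary3 ω g₁ g₂ h k *
            coboundary3 ω (g₁ * g₂ * h * (g₁ * g₂)⁻¹) (g₁ * g₂ * k * (g₁ * g₂)⁻¹) g₁ g₂)) := by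
  apply Additive.ofMul.injective
  simp only [OmegaCochain, gammaCochain, coboundary3, ofMul_mul, ofMul_div,
    mul_inv_rev, mul_assoc, inv_mul_cancel_left, inv_mul_cancel, mul_one]
  abel

end

/-- `Ω_{g₁g₂} = Ω_{g₁}^{g₂} · Ω_{g₂} · dγ(g₁,g₂)`, where
`Ω^{g₂}(a,b) = Ω(^{g₂}a, ^{g₂}b)` and `(df)(h,k) = f(h)·f(k)/f(hk)`. -/
theorem Omega_mul (G : Type*) [Group G] (ω : G → G → G → Circle)
    (hω : IsCocycle3 ω) (g₁ g₂ : G) :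
    ∀ h k : G,
      OmegaCochain ω (g₁ * g₂) h k =
        OmegaCochain ω g₁ (g₂ * h * g₂⁻¹) (g₂ * k * g₂⁻¹) * OmegaCochain ω g₂ h k *
          (gammaCochain ω g₁ g₂ h * gammaCochain ω g₁ g₂ k /
            gammaCochain ω g₁ g₂ (h * k)) := by
  intro h k
  simp only [omegaCochain_mul_eq_mul_coboundary3 ω g₁ g₂ h k, hω.coboundary3_eq_one,
    mul_one, div_one]
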